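/- arXiv:1210.2266 — 5 statements merged into one kernel-verified Lean document; each statement's English description precedes it below -/
import Mathlib

section
/- For all s ≥ 0, 4·P_s^2 = P_{2s+1} - P_{2s} - (-1)^s. -/
def pell : ℕ → ℤ
  | 0 => 0
  | 1 => 1
  | n + 2 => 2 * pell (n + 1) + pell n

def hpell : ℕ → ℤ
  | 0 => 1
  | 1 => 1
  | n + 2 => 2 * hpell (n + 1) + hpell n

lemma pell_hpell_succ (n : ℕ) :
    pell (n + 1) = pell n + hpell n ∧ hpell (n + 1) = pell (n + 1) + pell n := by
  induction n with
  | zero => simp [pell, hpell]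
  | succ n ih =>
    obtain ⟨h1, h2⟩ := ih
    constructor
    · show 2 * pell (n + 1) + pell n = _
      rw [h2]; ring
    · show 2 * hpell (n + 1) + hpell n = (2 * pell (n + 1) + pell n) + pell (n + 1)
      rw [h2]; linarith [h1]

lemma pell_succ_eq (n : ℕ) : pell (n + 1) = pell n + hpell n := (pell_hpell_succ n).1

lemma hpell_succ_eq (n : ℕ) : hpell (n + 1) = 2 * pell n + hpell n := by
  rw [(pell_hpell_succ n).2, pell_succ_eq]; ring

lemma hpell_sq (n : ℕ) : hpell n ^ 2 = 2 * pell n ^ 2 + (-1 : ℤ) ^ n := by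
  induction n with
  | zero => simp [pell, hpell]
  | succ n ih =>
    rw [hpell_succ_eq, pell_succ_eq, pow_succ]
    ring_nf
    ring_nf at ih
    linarith [ih]

lemma pell_double (n : ℕ) :
    pell (2 * n) = 2 * pell n * hpell n ∧
    pell (2 * n + 1) = pell (n + 1) ^ 2 + pell n ^ 2 := by
  induction n with
  | zero => simp [pell]
  | succ n ih =>
    obtain ⟨h1, h2⟩ := ih
    have e1 : 2 * (n + 1) = 2 * n + 1 + 1 := by ring
    have e2 : 2 * (n + 1) + 1 = 2 * n + 1 + 1 + 1 := by ring
    have p1 := pell_succ_eq n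
    have p2 := pell_succ_eq (n + 1)
    have q1 := hpell_succ_eq n
    constructor
    · rw [e1, show 2 * n + 1 + 1 = (2 * n) + 2 from rfl]
      show 2 * pell (2 * n + 1) + pell (2 * n) = _
      rw [h1, h2, p1, q1]; ring
    · rw [e2, show 2 * n + 1 + 1 + 1 = (2 * n + 1) + 2 from rfl]
      show 2 * pell (2 * n + 1 + 1) + pell (2 * n + 1) = _
      rw [show 2 * n + 1 + 1 = (2 * n) + 2 from rfl]
      show 2 * (2 * pell (2 * n + 1) + pell (2 * n)) + pell (2 * n + 1) = _
      rw [h1, h2, p2, p1, q1]; ring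

theorem four_pell_sq (s : ℕ) :
    4 * (pell s) ^ 2 = pell (2 * s + 1) - pell (2 * s) - (-1 : ℤ) ^ s := by
  obtain ⟨h1, h2⟩ := pell_double s
  rw [h1, h2, pell_succ_eq s]
  have := hpell_sq s
  ring_nf
  ring_nf at this
  linarith
end

section
/- For all m ≥ 0 and all k with 0 ≤ k ≤ 2m, P_{2m-k} = (-1)^{k+1}·(P_k·H_{2m} - H_k·P_{2m}). -/
lemma hpell_eq (n : ℕ) : hpell (n + 1) = pell (n + 1) + pell n := by
  induction n using Nat.twoStepInduction with
  | zero => simp [pell, hpell]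
  | one => simp [pell, hpell]
  | more n ih1 ih2 =>
    show hpell (n + 3) = pell (n + 3) + pell (n + 2)
    have h1 : hpell (n + 3) = 2 * hpell (n + 2) + hpell (n + 1) := rfl
    have h2 : pell (n + 3) = 2 * pell (n + 2) + pell (n + 1) := rfl
    have h3 : pell (n + 2) = 2 * pell (n + 1) + pell n := rfl
    rw [h1, h2, ih1, ih2, h3]; ring

lemma key : ∀ k j, pell k * hpell (k + j) - hpell k * pell (k + j)
    = (-1 : ℤ) ^ (k + 1) * pell j := by
  intro k
  induction k using Nat.twoStepInduction with
  | zero => intro j; simp [pell, hpell]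
  | one =>
    intro j
    show pell 1 * hpell (1 + j) - hpell 1 * pell (1 + j) = (-1 : ℤ) ^ 2 * pell j
    rw [Nat.add_comm 1 j, hpell_eq]
    simp [pell, hpell]
  | more k ih1 ih2 =>
    intro j
    have e1 : k + 2 + j = (k + 1) + (j + 1) := by ring
    have e2 : k + 2 + j = k + (j + 2) := by ring
    have hp : pell (k + 2) = 2 * pell (k + 1) + pell k := rfl
    have hh : hpell (k + 2) = 2 * hpell (k + 1) + hpell k := rfl
    have hpj : pell (j + 2) = 2 * pell (j + 1) + pell j := rfl
    have h1 := ih2 (j + 1)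
    have h2 := ih1 (j + 2)
    rw [← e1] at h1
    rw [← e2] at h2
    show pell (k + 2) * hpell (k + 2 + j) - hpell (k + 2) * pell (k + 2 + j)
        = (-1 : ℤ) ^ (k + 2 + 1) * pell j
    have : pell (k + 2) * hpell (k + 2 + j) - hpell (k + 2) * pell (k + 2 + j)
        = 2 * (pell (k + 1) * hpell (k + 2 + j) - hpell (k + 1) * pell (k + 2 + j))
          + (pell k * hpell (k + 2 + j) - hpell k * pell (k + 2 + j)) := by
      rw [hp, hh]; ring
    rw [this, h1, h2, hpj, pow_succ, pow_succ, pow_succ]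
    ring

theorem pell_reflection (m k : ℕ) (hk : k ≤ 2 * m) :
    pell (2 * m - k) = (-1 : ℤ) ^ (k + 1) * (pell k * hpell (2 * m) - hpell k * pell (2 * m)) := by
  obtain ⟨j, hj⟩ : ∃ j, 2 * m = k + j := ⟨2 * m - k, by omega⟩
  have hsub : 2 * m - k = j := by omega
  rw [hsub, hj, key, ← mul_assoc, ← pow_add]
  have : Even (k + 1 + (k + 1)) := ⟨k + 1, rfl⟩
  rw [this.neg_one_pow, one_mul]
end

section
/- Define α_n := 2·P_{n+1}^2 / H_n^2 if n is even and α_n := H_{n+1}^2 / (2·P_n^2) if n is odd, and β_n := H_{n+2}/H_n if n is even and β_n := P_{n+2}/P_n if n is odd. Then for all n ≥ 0, α_n < β_n < α_{n+1}, and both sequences (α_n) and (β_n) converge to σ² = 3 + 2√2. -/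
noncomputable def alphaSeq (n : ℕ) : ℝ :=
  if Even n then 2 * (pell (n + 1) : ℝ) ^ 2 / (hpell n : ℝ) ^ 2
  else (hpell (n + 1) : ℝ) ^ 2 / (2 * (pell n : ℝ) ^ 2)

noncomputable def betaSeq (n : ℕ) : ℝ :=
  if Even n then (hpell (n + 2) : ℝ) / (hpell n : ℝ)
  else (pell (n + 2) : ℝ) / (pell n : ℝ)

lemma pell_step : ∀ n, pell (n+1) = pell n + hpell n ∧ hpell (n+1) = hpell n + 2 * pell n := by
  intro n
  induction n with
  | zero => simp [pell, hpell]
  | succ k ih =>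
    obtain ⟨h1, h2⟩ := ih
    rw [show k+1+1 = k+2 from rfl, pell, hpell]
    omega

lemma hpell_ge : ∀ n, 1 ≤ hpell n ∧ 1 ≤ hpell (n+1) := by
  intro n
  induction n with
  | zero => simp [hpell]
  | succ k ih => refine ⟨ih.2, ?_⟩; rw [show k+1+1 = k+2 from rfl, hpell]; omega

lemma pell_ge : ∀ n, 0 ≤ pell n ∧ 1 ≤ pell (n+1) := by
  intro n
  induction n with
  | zero => simp [pell]
  | succ k ih => refine ⟨by omega, ?_⟩; rw [show k+1+1 = k+2 from rfl, pell]; omega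

lemma hpell_norm : ∀ n, hpell n ^ 2 - 2 * pell n ^ 2 = (-1)^n := by
  intro n
  induction n with
  | zero => simp [pell, hpell]
  | succ k ih =>
    obtain ⟨h1, h2⟩ := pell_step k
    rw [h1, h2, pow_succ]
    linear_combination (-1 : ℤ) * ih

lemma prodH (n : ℕ) : hpell (n+2) * hpell n = 2 * pell (n+1)^2 + (-1)^n := by
  obtain ⟨h1, h2⟩ := pell_step n
  obtain ⟨h3, h4⟩ := pell_step (n+1)
  rw [h4, h2, h1]
  linear_combination hpell_norm n

lemma prodP (n : ℕ) : 2 * pell (n+2) * pell n = hpell (n+1)^2 - (-1)^n := by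
  obtain ⟨h1, h2⟩ := pell_step n
  obtain ⟨h3, h4⟩ := pell_step (n+1)
  rw [h3, h1, h2]
  linear_combination (-1 : ℤ) * hpell_norm n

lemma sq2 : Real.sqrt 2 ^ 2 = 2 := Real.sq_sqrt (by norm_num)

lemma sqrt2_gt_one : 1 < Real.sqrt 2 := by
  nlinarith [sq2, Real.sqrt_nonneg 2]

lemma sqrt2_lt_two : Real.sqrt 2 < 2 := by
  nlinarith [sq2, Real.sqrt_nonneg 2]

lemma hpell_closed : ∀ n, (hpell (n+1) : ℝ) =
    (1 + Real.sqrt 2) * hpell n - Real.sqrt 2 * (1 - Real.sqrt 2)^n := by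
  intro n
  induction n with
  | zero => simp [hpell]
  | succ k ih =>
    rw [show k+1+1 = k+2 from rfl, hpell, pow_succ]
    push_cast
    linear_combination (1 - Real.sqrt 2) * ih - (hpell k : ℝ) * sq2

lemma pell_closed : ∀ n, (pell (n+1) : ℝ) =
    (1 + Real.sqrt 2) * pell n + (1 - Real.sqrt 2)^n := by
  intro n
  induction n with
  | zero => simp [pell]
  | succ k ih =>
    rw [show k+1+1 = k+2 from rfl, pell, pow_succ]
    push_cast
    linear_combination (1 - Real.sqrt 2) * ih - (pell k : ℝ) * sq2

lemma hpell_L (n : ℕ) : (hpell (n+2) : ℝ) =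
    (3 + 2*Real.sqrt 2) * hpell n - 2 * Real.sqrt 2 * (1 - Real.sqrt 2)^n := by
  have A := hpell_closed (n+1)
  have B := hpell_closed n
  rw [pow_succ] at A
  linear_combination A + (1 + Real.sqrt 2) * B + (hpell n : ℝ) * sq2

lemma pell_L (n : ℕ) : (pell (n+2) : ℝ) =
    (3 + 2*Real.sqrt 2) * pell n + 2 * (1 - Real.sqrt 2)^n := by
  have A := pell_closed (n+1)
  have B := pell_closed n
  rw [pow_succ] at A
  linear_combination A + (1 + Real.sqrt 2) * B + (pell n : ℝ) * sq2

lemma interlace (n : ℕ) : alphaSeq n < betaSeq n ∧ betaSeq n < alphaSeq (n + 1) := by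
  rcases Nat.even_or_odd n with hn | hn
  · have hodd : ¬ Even (n+1) := by simp [Nat.even_add_one, hn]
    have hh : (hpell (n+2) : ℝ) * hpell n = 2 * (pell (n+1) : ℝ)^2 + 1 := by
      have := prodH n
      rw [hn.neg_one_pow] at this
      exact_mod_cast this
    have h0 : (0:ℝ) < hpell n := by exact_mod_cast lt_of_lt_of_le one_pos (hpell_ge n).1
    have h2 : (0:ℝ) < hpell (n+2) := by exact_mod_cast lt_of_lt_of_le one_pos (hpell_ge (n+2)).1
    have p1 : (0:ℝ) < pell (n+1) := by exact_mod_cast lt_of_lt_of_le one_pos (pell_ge n).2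
    simp only [alphaSeq, betaSeq, if_pos hn, if_neg hodd]
    constructor
    · rw [div_lt_div_iff₀ (by positivity) h0]
      have e : (hpell (n+2):ℝ) * (hpell n)^2 = 2*(pell (n+1):ℝ)^2 * hpell n + hpell n := by
        linear_combination (hpell n : ℝ) * hh
      nlinarith
    · rw [div_lt_div_iff₀ h0 (by positivity)]
      have e : (hpell (n+2):ℝ)^2 * hpell n = (hpell (n+2):ℝ) * (2*(pell (n+1):ℝ)^2) + hpell (n+2) := by
        linear_combination (hpell (n+2) : ℝ) * hh
      nlinarith
  · have hne : ¬ Even n := by simp [Nat.not_even_iff_odd.mpr hn]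
    have heven : Even (n+1) := Nat.even_add_one.mpr hne
    have pp : 2 * (pell (n+2) : ℝ) * pell n = (hpell (n+1) : ℝ)^2 + 1 := by
      have h := prodP n
      rw [hn.neg_one_pow] at h
      have h' : 2 * pell (n+2) * pell n = hpell (n+1)^2 + 1 := by linarith
      exact_mod_cast h'
    obtain ⟨k, hk⟩ := hn
    have p0 : (0:ℝ) < pell n := by
      have := (pell_ge (2*k)).2
      rw [hk]; exact_mod_cast this
    have p2 : (0:ℝ) < pell (n+2) := by exact_mod_cast lt_of_lt_of_le one_pos (pell_ge (n+1)).2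
    have h1 : (0:ℝ) < hpell (n+1) := by exact_mod_cast lt_of_lt_of_le one_pos (hpell_ge (n+1)).1
    simp only [alphaSeq, betaSeq, if_neg hne, if_pos heven]
    constructor
    · rw [div_lt_div_iff₀ (by positivity) p0]
      have e : (pell (n+2):ℝ) * (2*(pell n:ℝ)^2) = (hpell (n+1):ℝ)^2 * pell n + pell n := by
        linear_combination (pell n : ℝ) * pp
      nlinarith
    · rw [div_lt_div_iff₀ p0 (by positivity)]
      have e : 2*(pell (n+2):ℝ)^2 * pell n = (pell (n+2):ℝ) * (hpell (n+1):ℝ)^2 + pell (n+2) := by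
        linear_combination (pell (n+2) : ℝ) * pp
      nlinarith

lemma beta_bound (n : ℕ) :
    |betaSeq n - (3 + 2*Real.sqrt 2)| ≤ 2 * Real.sqrt 2 * (Real.sqrt 2 - 1)^n := by
  have habs : |(1 - Real.sqrt 2)^n| = (Real.sqrt 2 - 1)^n := by
    rw [abs_pow, abs_sub_comm, abs_of_nonneg (by linarith [sqrt2_gt_one])]
  have hs0 : (0:ℝ) < Real.sqrt 2 := by linarith [sqrt2_gt_one]
  rcases Nat.even_or_odd n with hn | hn
  · have h0 : (1:ℝ) ≤ hpell n := by exact_mod_cast (hpell_ge n).1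
    simp only [betaSeq, if_pos hn]
    have key : (hpell (n+2):ℝ) / hpell n - (3 + 2*Real.sqrt 2)
        = -(2 * Real.sqrt 2 * (1 - Real.sqrt 2)^n) / hpell n := by
      rw [div_sub' (c := (hpell n : ℝ)) (ne_of_gt (by linarith)), hpell_L n]
      ring_nf
    rw [key, abs_div, abs_neg, abs_of_nonneg (by linarith : (0:ℝ) ≤ (hpell n:ℝ))]
    rw [abs_mul, habs, abs_of_nonneg (by positivity : (0:ℝ) ≤ 2*Real.sqrt 2)]
    exact div_le_self (by nlinarith [pow_nonneg (by linarith [sqrt2_gt_one] : (0:ℝ) ≤ Real.sqrt 2 - 1) n, sqrt2_gt_one]) h0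
  · have hne : ¬ Even n := by simp [Nat.not_even_iff_odd.mpr hn]
    obtain ⟨k, hk⟩ := hn
    have p0 : (1:ℝ) ≤ pell n := by
      have := (pell_ge (2*k)).2
      rw [hk]; exact_mod_cast this
    simp only [betaSeq, if_neg hne]
    have key : (pell (n+2):ℝ) / pell n - (3 + 2*Real.sqrt 2)
        = (2 * (1 - Real.sqrt 2)^n) / pell n := by
      rw [div_sub' (c := (pell n : ℝ)) (ne_of_gt (by linarith)), pell_L n]
      ring_nf
    rw [key, abs_div, abs_of_nonneg (by linarith : (0:ℝ) ≤ (pell n:ℝ))]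
    rw [abs_mul, habs, abs_of_nonneg (by norm_num : (0:ℝ) ≤ 2)]
    calc 2 * (Real.sqrt 2 - 1)^n / (pell n : ℝ) ≤ 2 * (Real.sqrt 2 - 1)^n := by
          exact div_le_self (by nlinarith [pow_nonneg (by linarith [sqrt2_gt_one] : (0:ℝ) ≤ Real.sqrt 2 - 1) n]) p0
      _ ≤ 2 * Real.sqrt 2 * (Real.sqrt 2 - 1)^n := by
          nlinarith [pow_nonneg (by linarith [sqrt2_gt_one] : (0:ℝ) ≤ Real.sqrt 2 - 1) n, sqrt2_gt_one]

theorem alpha_beta_interlace_and_tendsto :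
    (∀ n : ℕ, alphaSeq n < betaSeq n ∧ betaSeq n < alphaSeq (n + 1)) ∧
    Filter.Tendsto alphaSeq Filter.atTop (nhds (3 + 2 * Real.sqrt 2)) ∧
    Filter.Tendsto betaSeq Filter.atTop (nhds (3 + 2 * Real.sqrt 2)) := by
  set L : ℝ := 3 + 2 * Real.sqrt 2 with hL
  have hbeta : Filter.Tendsto betaSeq Filter.atTop (nhds L) := by
    have hr0 : (0:ℝ) ≤ Real.sqrt 2 - 1 := by linarith [sqrt2_gt_one]
    have hr1 : Real.sqrt 2 - 1 < 1 := by linarith [sqrt2_lt_two]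
    have hg : Filter.Tendsto (fun n => 2 * Real.sqrt 2 * (Real.sqrt 2 - 1)^n)
        Filter.atTop (nhds 0) := by
      have := tendsto_pow_atTop_nhds_zero_of_lt_one hr0 hr1
      simpa using this.const_mul (2 * Real.sqrt 2)
    have h0 : Filter.Tendsto (fun n => betaSeq n - L) Filter.atTop (nhds 0) :=
      squeeze_zero_norm (fun n => by simpa using beta_bound n) hg
    have := h0.add_const L
    simpa using this
  refine ⟨interlace, ?_, hbeta⟩
  have hlow : Filter.Tendsto (fun n => betaSeq (n - 1)) Filter.atTop (nhds L) :=
    hbeta.comp (Filter.tendsto_sub_atTop_nat 1)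
  apply tendsto_of_tendsto_of_tendsto_of_le_of_le' hlow hbeta
  · filter_upwards [Filter.eventually_ge_atTop 1] with n hn
    obtain ⟨m, rfl⟩ := Nat.exists_eq_add_of_le' hn
    simpa using (interlace m).2.le
  · filter_upwards with n
    exact (interlace n).1.le
end

section
/- For every k ≥ 1, the k-th ECH capacity of the ellipsoid E(1,2) equals the k-th ECH capacity of the cube C(1) = P(1,1). Concretely: the k-th smallest element (with multiplicity) of the multiset {m + 2n : m, n ∈ ℕ} equals min{ m + n : m, n ∈ ℕ, (m+1)(n+1) ≥ k+1 } (with k-th counted starting at k = 0 for the smallest, i.e. c^k is the (k+1)-st entry). -/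
private lemma sum_aux (t : ℕ) : ∀ q : ℕ, 2 * q ≤ t →
    ∑ n ∈ Finset.range (q + 1), (t + 1 - 2 * n) = (q + 1) * (t + 1 - q) := by
  intro q
  induction q with
  | zero => simp
  | succ q ih =>
    intro h
    rw [Finset.sum_range_succ, ih (by omega)]
    zify [show q ≤ t + 1 by omega, show 2 * (q + 1) ≤ t + 1 by omega,
      show q + 1 ≤ t + 1 by omega]
    ring

private lemma ncard_eq (t : ℕ) :
    Set.ncard {p : ℕ × ℕ | p.1 + 2 * p.2 ≤ t} = (t / 2 + 1) * (t + 1 - t / 2) := by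
  set F : Finset (ℕ × ℕ) :=
    (Finset.range (t + 1) ×ˢ Finset.range (t / 2 + 1)).filter (fun p => p.1 + 2 * p.2 ≤ t)
    with hF
  have hset : {p : ℕ × ℕ | p.1 + 2 * p.2 ≤ t} = ↑F := by
    ext p
    simp [hF, Finset.mem_filter, Finset.mem_product]
    omega
  rw [hset, Set.ncard_coe_finset]
  rw [Finset.card_eq_sum_card_fiberwise (f := Prod.snd) (t := Finset.range (t / 2 + 1))
    (by intro p hp; simp [hF, Finset.mem_filter, Finset.mem_product] at hp ⊢; omega)]
  rw [← sum_aux t (t / 2) (by omega)]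
  apply Finset.sum_congr rfl
  intro n hn
  simp only [Finset.mem_range] at hn
  have h2 : 2 * n ≤ t := by omega
  have himg : F.filter (fun p => p.2 = n) = (Finset.range (t + 1 - 2 * n)).image (fun m => (m, n)) := by
    ext ⟨a, b⟩
    simp [hF, Finset.mem_filter, Finset.mem_product, Prod.ext_iff, eq_comm]
    rintro rfl
    omega
  rw [himg, Finset.card_image_of_injective _ (fun a b h => by simpa using h), Finset.card_range]

private lemma prod_le_half (m n : ℕ) (h : m ≤ n) :
    (m + 1) * (n + 1) ≤ ((m + n) / 2 + 1) * (m + n + 1 - (m + n) / 2) := by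
  set s := m + n with hs
  set q := s / 2 with hq
  have hm : m ≤ q := by omega
  have hqs : 2 * q ≤ s := by omega
  have hn : n = s - m := by omega
  zify [show q ≤ s + 1 by omega, show m ≤ s by omega]
  have h1 : (0 : ℤ) ≤ (q : ℤ) - m := by push_cast; omega
  have h2 : (0 : ℤ) ≤ (s : ℤ) - q - m := by
    have hx : m + q ≤ s := by omega
    push_cast; omega
  nlinarith [mul_nonneg h1 h2, (by push_cast; omega : (s : ℤ) = m + n)]

/-- The k-th ECH capacity of E(1,2) equals the k-th ECH capacity of the cube C(1)=P(1,1):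
the k-th smallest element (0-indexed, with multiplicity) of the multiset {m + 2n : m,n ∈ ℕ}
equals min {m + n : (m+1)(n+1) ≥ k+1}. -/
theorem ech_E12_eq_ech_cube (k : ℕ) (hk : 1 ≤ k) :
    sInf {t : ℕ | k + 1 ≤ Set.ncard {p : ℕ × ℕ | p.1 + 2 * p.2 ≤ t}} =
      sInf {s : ℕ | ∃ m n : ℕ, s = m + n ∧ k + 1 ≤ (m + 1) * (n + 1)} := by
  congr 1
  ext t
  simp only [Set.mem_setOf_eq, ncard_eq]
  constructor
  · intro h
    refine ⟨t / 2, t - t / 2, by omega, ?_⟩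
    have : t - t / 2 + 1 = t + 1 - t / 2 := by omega
    rw [this]; exact h
  · rintro ⟨m, n, rfl, h⟩
    rcases le_total m n with hmn | hmn
    · exact h.trans (prod_le_half m n hmn)
    · calc k + 1 ≤ (n + 1) * (m + 1) := by rwa [mul_comm]
        _ ≤ ((n + m) / 2 + 1) * (n + m + 1 - (n + m) / 2) := prod_le_half n m hmn
        _ = ((m + n) / 2 + 1) * (m + n + 1 - (m + n) / 2) := by rw [Nat.add_comm n m]
end

section
/- For all k ≥ 1 and j ≥ 1, let u = u_k(j) := (j·P_{2k+4} + P_{2k+2})/(j·P_{2k+2} + P_{2k}) with denominator q := (j·P_{2k+2} + P_{2k})/2. Then q²·(u² − 6u + 1) = j² + 6j + 1. -/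
lemma pell_add_four (n : ℕ) : pell (n + 4) = 6 * pell (n + 2) - pell n := by
  show pell (n + 2 + 2) = 6 * pell (n + 2) - pell n
  simp only [pell]
  ring

lemma pell_quad (n : ℕ) :
    pell (2 * n + 2) ^ 2 - 6 * pell (2 * n + 2) * pell (2 * n) + pell (2 * n) ^ 2 = 4 := by
  induction n with
  | zero => simp [pell]
  | succ m ih =>
      have h : 2 * (m + 1) + 2 = 2 * m + 4 := by ring
      have h2 : 2 * (m + 1) = 2 * m + 2 := by ring
      rw [h, h2, pell_add_four]
      nlinarith [ih]

lemma pell_nonneg (n : ℕ) : 0 ≤ pell n ∧ 0 ≤ pell (n + 1) := by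
  induction n with
  | zero => simp [pell]
  | succ m ih =>
      refine ⟨ih.2, ?_⟩
      show 0 ≤ pell (m + 2)
      simp only [pell]
      linarith [ih.1, ih.2]

lemma pell_pos (n : ℕ) (hn : 1 ≤ n) : 0 < pell n := by
  match n, hn with
  | 1, _ => simp [pell]
  | m + 2, _ =>
      have h1 := pell_nonneg m
      simp only [pell]
      have : 0 < pell (m + 1) ∨ 0 < pell m := by
        rcases Nat.eq_zero_or_pos m with hm | hm
        · left; subst hm; simp [pell]
        · right; exact pell_pos m hm
      rcases this with h | h <;> linarith [h1.1, h1.2]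

theorem u_k_j_quadratic (k j : ℕ) (hk : 1 ≤ k) (hj : 1 ≤ j) :
    (((j : ℚ) * (pell (2 * k + 2) : ℚ) + (pell (2 * k) : ℚ)) / 2) ^ 2 *
        ((((j : ℚ) * (pell (2 * k + 4) : ℚ) + (pell (2 * k + 2) : ℚ)) /
            ((j : ℚ) * (pell (2 * k + 2) : ℚ) + (pell (2 * k) : ℚ))) ^ 2
          - 6 * (((j : ℚ) * (pell (2 * k + 4) : ℚ) + (pell (2 * k + 2) : ℚ)) /
            ((j : ℚ) * (pell (2 * k + 2) : ℚ) + (pell (2 * k) : ℚ))) + 1)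
      = (j : ℚ) ^ 2 + 6 * (j : ℚ) + 1 := by
  have ha : (0:ℤ) < pell (2 * k) := pell_pos _ (by omega)
  have hb : (0:ℤ) < pell (2 * k + 2) := pell_pos _ (by omega)
  have hc : pell (2 * k + 4) = 6 * pell (2 * k + 2) - pell (2 * k) := pell_add_four _
  have hq := pell_quad k
  have hcQ : ((pell (2 * k + 4) : ℤ) : ℚ) = 6 * (pell (2 * k + 2) : ℚ) - (pell (2 * k) : ℚ) := by
    rw [hc]; push_cast; ring
  have hqQ : ((pell (2 * k + 2)) : ℚ) ^ 2 - 6 * (pell (2 * k + 2) : ℚ) * (pell (2 * k) : ℚ)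
      + (pell (2 * k) : ℚ) ^ 2 = 4 := by exact_mod_cast congrArg (Int.cast : ℤ → ℚ) hq
  have hj1 : (1:ℚ) ≤ (j : ℚ) := by exact_mod_cast hj
  have haQ : (0:ℚ) < (pell (2 * k) : ℚ) := by exact_mod_cast ha
  have hbQ : (0:ℚ) < (pell (2 * k + 2) : ℚ) := by exact_mod_cast hb
  have hD : (j : ℚ) * (pell (2 * k + 2) : ℚ) + (pell (2 * k) : ℚ) ≠ 0 := by
    nlinarith
  rw [hcQ]
  set a := (pell (2 * k) : ℚ)
  set b := (pell (2 * k + 2) : ℚ)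
  set D := (j:ℚ) * b + a with hDdef
  set N := (j:ℚ) * (6 * b - a) + b with hNdef
  have key : N ^ 2 - 6 * N * D + D ^ 2 = 4 * ((j:ℚ) ^ 2 + 6 * (j:ℚ) + 1) := by
    rw [hDdef, hNdef]
    linear_combination ((j:ℚ) ^ 2 + 6 * (j:ℚ) + 1) * hqQ
  have step : (D / 2) ^ 2 * ((N / D) ^ 2 - 6 * (N / D) + 1)
      = (N ^ 2 - 6 * N * D + D ^ 2) / 4 := by
    field_simp
    ring
  rw [step, key]
  ring
end
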